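/- Let N ≥ 2, 0 < ε < π/2 and 0 < η < min{π/4, ε/2}. Then there exists a constant C > 0, depending only on N, ε, η, such that for all λ ∈ Σ_ε, all ξ' = (ξ_1, …, ξ_{N−1}) with each ξ_j ∈ Σ̃_η, all x_N > 0 and all ℓ ∈ {1, …, N−1}, the function S(x_N) := ((A + B)/B) e^{−A x_N} satisfies |ξ_ℓ| |S(x_N)| + |∂_{x_N} S(x_N)| ≤ C x_N^{−1}. -/

import Mathlib

open Complex

noncomputable section

/-- The sector `Σ_ε = {λ ∈ ℂ \ {0} : |arg λ| < π − ε}`. -/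
def SSector (ε : ℝ) : Set ℂ := {z | z ≠ 0 ∧ |z.arg| < Real.pi - ε}

/-- The double sector `Σ̃_η = {z ∈ ℂ \ {0} : |arg z| < η or |arg z| > π − η}`. -/
def DSector (η : ℝ) : Set ℂ := {z | z ≠ 0 ∧ (|z.arg| < η ∨ Real.pi - η < |z.arg|)}

/-- `A = (ξ_1² + ⋯ + ξ_{N−1}²)^{1/2}` (principal square root). -/
def AA {n : ℕ} (ξ : Fin n → ℂ) : ℂ := (∑ j, ξ j ^ 2) ^ ((1 : ℂ) / 2)

/-- `B = (λ + A²)^{1/2}` (principal square root). -/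
def BB {n : ℕ} (lam : ℂ) (ξ : Fin n → ℂ) : ℂ := (lam + AA ξ ^ 2) ^ ((1 : ℂ) / 2)

/-- `Ã = (|ξ_1|² + ⋯ + |ξ_{N−1}|²)^{1/2}`. -/
def tA {n : ℕ} (ξ : Fin n → ℂ) : ℝ := Real.sqrt (∑ j, ‖ξ j‖ ^ 2)

/-- `M_λ(ξ', x_N) = (e^{−B x_N} − e^{−A x_N})/(B − A)`. -/
def Mfun {n : ℕ} (lam : ℂ) (ξ : Fin n → ℂ) (x : ℝ) : ℂ :=
  (Complex.exp (-BB lam ξ * (x : ℂ)) - Complex.exp (-AA ξ * (x : ℂ))) / (BB lam ξ - AA ξ)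

/-!
Write `S = ∑ ξ_j²`, so that `A = √S`. On the double sector `Re ξ_j² ≥ cos 2η ‖ξ_j‖²`, hence `S` lies
in the sector `|arg| ≤ 2η`; this gives `Re A ≥ cos η ‖A‖` and `√(cos 2η) ‖ξ_ℓ‖ ≤ ‖A‖`. As
`|arg λ| < π − ε`, the vectors `λ` and `S` make an angle at most `π − (ε − 2η)`, so
`‖B‖² = ‖λ + S‖ ≥ sin (ε − 2η) ‖A‖²` and `‖(A + B) / B‖` is bounded. Finally `∂S = −A S` and
`‖A‖ e^{−x Re A} ≤ (cos η)⁻¹ (x Re A) e^{−x Re A} / x ≤ (x cos η)⁻¹`, because `t e^{−t} ≤ 1`.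
-/

theorem abs_arg_le_of_cos_mul_norm_le_re {z : ℂ} {θ : ℝ} (hθ : 0 ≤ θ)
    (h : Real.cos θ * ‖z‖ ≤ z.re) : |z.arg| ≤ θ := by
  rcases eq_or_ne z 0 with rfl | hz
  · simpa using hθ
  by_contra! hlt
  have hcos : Real.cos |z.arg| < Real.cos θ :=
    Real.cos_lt_cos_of_nonneg_of_le_pi hθ (abs_arg_le_pi z) hlt
  rw [Real.cos_abs, cos_arg hz, div_lt_iff₀ (norm_pos_iff.mpr hz)] at hcos
  linarith

theorem sin_mul_norm_le_norm_add {z w : ℂ} {δ : ℝ} (hδ : 0 ≤ δ)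
    (h : |z.arg| + |w.arg| ≤ Real.pi - δ) : Real.sin δ * ‖w‖ ≤ ‖z + w‖ := by
  have hcos : -Real.cos δ ≤ Real.cos (z.arg - w.arg) := by
    rw [← Real.cos_pi_sub, ← Real.cos_abs (z.arg - w.arg)]
    exact Real.cos_le_cos_of_nonneg_of_le_pi (abs_nonneg _) (by linarith)
      ((abs_sub _ _).trans h)
  have hcross : (z * (starRingEnd ℂ) w).re = ‖z‖ * ‖w‖ * Real.cos (z.arg - w.arg) := by
    rw [mul_re, conj_re, conj_im, Real.cos_sub, ← norm_mul_cos_arg z, ← norm_mul_sin_arg z,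
      ← norm_mul_cos_arg w, ← norm_mul_sin_arg w]
    ring
  have hsq : (Real.sin δ * ‖w‖) ^ 2 ≤ ‖z + w‖ ^ 2 := by
    rw [Complex.sq_norm, normSq_add, ← Complex.sq_norm, ← Complex.sq_norm, hcross]
    have := mul_le_mul_of_nonneg_left hcos (by positivity : 0 ≤ ‖z‖ * ‖w‖)
    nlinarith [sq_nonneg (‖z‖ - Real.cos δ * ‖w‖), Real.sin_sq_add_cos_sq δ]
  exact (abs_le_of_sq_le_sq' hsq (norm_nonneg _)).2

theorem mul_norm_cpow_inv_two_le_re {z : ℂ} {c : ℝ} (h : c * ‖z‖ ≤ z.re) :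
    Real.sqrt ((1 + c) / 2) * ‖z ^ (2⁻¹ : ℂ)‖ ≤ (z ^ (2⁻¹ : ℂ)).re := by
  have hnorm : ‖z ^ (2⁻¹ : ℂ)‖ = Real.sqrt ‖z‖ := by
    rw [show (2⁻¹ : ℂ) = ((2⁻¹ : ℝ) : ℂ) by push_cast; rfl, norm_cpow_real,
      Real.sqrt_eq_rpow, one_div]
  rw [cpow_inv_two_re, hnorm, ← Real.sqrt_mul' _ (norm_nonneg z)]
  exact Real.sqrt_le_sqrt (by linarith)

theorem mul_exp_neg_mul_le_inv (t : ℝ) {x : ℝ} (hx : 0 < x) :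
    t * Real.exp (-(t * x)) ≤ x⁻¹ := by
  have key : t * x * Real.exp (-(t * x)) ≤ 1 := by
    calc t * x * Real.exp (-(t * x)) ≤ Real.exp (t * x) * Real.exp (-(t * x)) := by
          gcongr; linarith [Real.add_one_le_exp (t * x)]
      _ = 1 := by rw [← Real.exp_add, add_neg_cancel, Real.exp_zero]
  calc t * Real.exp (-(t * x)) = t * x * Real.exp (-(t * x)) * x⁻¹ := by field_simp
    _ ≤ 1 * x⁻¹ := by gcongr
    _ = x⁻¹ := one_mul _

theorem norm_mul_norm_cexp_neg_mul_le {A : ℂ} {κ x : ℝ} (hκ : 0 < κ) (hA : κ * ‖A‖ ≤ A.re)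
    (hx : 0 < x) : ‖A‖ * ‖cexp (-A * x)‖ ≤ κ⁻¹ * x⁻¹ := by
  rw [norm_exp, show (-A * x).re = -(A.re * x) by simp]
  calc ‖A‖ * Real.exp (-(A.re * x)) = κ⁻¹ * (κ * ‖A‖ * Real.exp (-(A.re * x))) := by
        field_simp
    _ ≤ κ⁻¹ * (A.re * Real.exp (-(A.re * x))) := by gcongr
    _ ≤ κ⁻¹ * x⁻¹ := by gcongr; exact mul_exp_neg_mul_le_inv _ hx

theorem norm_deriv_mul_cexp_neg_mul (q A : ℂ) (x : ℝ) :
    ‖deriv (fun y : ℝ => q * cexp (-A * y)) x‖ = ‖A‖ * ‖q * cexp (-A * x)‖ := by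
  have hderiv : HasDerivAt (fun y : ℝ => q * cexp (-A * y)) (q * (cexp (-A * x) * -A)) x := by
    have := ((hasDerivAt_id (x : ℂ)).const_mul (-A)).cexp
    simp only [id, mul_one] at this
    exact this.comp_ofReal.const_mul q
  rw [hderiv.deriv, norm_mul, norm_mul, norm_mul, norm_neg]
  ring

theorem norm_add_div_le {A B : ℂ} {ρ : ℝ} (hρ : 0 < ρ) (h : ρ * ‖A‖ ≤ ‖B‖) :
    ‖(A + B) / B‖ ≤ 1 + ρ⁻¹ := by
  rcases eq_or_ne B 0 with rfl | hB
  · simp only [add_zero, div_zero, norm_zero]; positivity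
  rw [add_div, div_self hB, add_comm]
  refine (norm_add_le _ _).trans ?_
  rw [norm_one, norm_div]
  gcongr
  rwa [div_le_iff₀ (norm_pos_iff.mpr hB), le_inv_mul_iff₀ hρ]

theorem norm_mul_norm_add_norm_deriv_le {A B : ℂ} {s x κ ρ μ : ℝ} (hκ : 0 < κ) (hρ : 0 < ρ)
    (hμ : 0 < μ) (hx : 0 < x) (hA : κ * ‖A‖ ≤ A.re) (hB : ρ * ‖A‖ ≤ ‖B‖) (hs : μ * s ≤ ‖A‖) :
    s * ‖(A + B) / B * cexp (-A * x)‖ + ‖deriv (fun y : ℝ => (A + B) / B * cexp (-A * y)) x‖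
      ≤ (μ⁻¹ + 1) * (1 + ρ⁻¹) * κ⁻¹ * x⁻¹ := by
  rw [norm_deriv_mul_cexp_neg_mul, norm_mul]
  have hs' : s ≤ μ⁻¹ * ‖A‖ := (le_inv_mul_iff₀ hμ).2 hs
  calc s * (‖(A + B) / B‖ * ‖cexp (-A * x)‖) + ‖A‖ * (‖(A + B) / B‖ * ‖cexp (-A * x)‖)
      ≤ (μ⁻¹ * ‖A‖ + ‖A‖) * (‖(A + B) / B‖ * ‖cexp (-A * x)‖) := by
        rw [add_mul]; gcongr
    _ = (μ⁻¹ + 1) * ‖(A + B) / B‖ * (‖A‖ * ‖cexp (-A * x)‖) := by ring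
    _ ≤ (μ⁻¹ + 1) * (1 + ρ⁻¹) * (κ⁻¹ * x⁻¹) := by
        gcongr (μ⁻¹ + 1) * ?_ * ?_
        exacts [norm_add_div_le hρ hB, norm_mul_norm_cexp_neg_mul_le hκ hA hx]
    _ = (μ⁻¹ + 1) * (1 + ρ⁻¹) * κ⁻¹ * x⁻¹ := by ring

theorem AA_sq {n : ℕ} (ξ : Fin n → ℂ) : AA ξ ^ 2 = ∑ j, ξ j ^ 2 := by
  rw [AA, one_div, cpow_ofNat_inv_pow]

theorem sq_norm_BB {n : ℕ} (lam : ℂ) (ξ : Fin n → ℂ) : ‖BB lam ξ‖ ^ 2 = ‖lam + AA ξ ^ 2‖ := by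
  rw [BB, one_div, ← norm_pow, cpow_ofNat_inv_pow]

theorem cos_two_mul_mul_sq_norm_le_re_sq {η : ℝ} (hη : η ≤ Real.pi / 2) {ξ : ℂ}
    (hξ : ξ ∈ DSector η) : Real.cos (2 * η) * ‖ξ‖ ^ 2 ≤ (ξ ^ 2).re := by
  have hre : (ξ ^ 2).re = ‖ξ‖ ^ 2 * Real.cos (2 * |ξ.arg|) := by
    rw [show 2 * |ξ.arg| = |2 * ξ.arg| by rw [abs_mul, abs_two], Real.cos_abs,
      Real.cos_two_mul', sq, mul_re, ← norm_mul_cos_arg ξ, ← norm_mul_sin_arg ξ]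
    ring
  have hcos : Real.cos (2 * η) ≤ Real.cos (2 * |ξ.arg|) := by
    have harg := abs_arg_le_pi ξ
    rcases hξ.2 with h | h
    · exact Real.cos_le_cos_of_nonneg_of_le_pi (by positivity) (by linarith) (by linarith)
    · rw [← Real.cos_two_pi_sub (2 * |ξ.arg|)]
      exact Real.cos_le_cos_of_nonneg_of_le_pi (by linarith) (by linarith) (by linarith)
  rw [hre, mul_comm]
  gcongr

section DoubleSector

variable {n : ℕ} {η : ℝ} {ξ : Fin n → ℂ}

theorem cos_two_mul_mul_sum_sq_norm_le_re_AA_sq (hη : η ≤ Real.pi / 2)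
    (hξ : ∀ i, ξ i ∈ DSector η) : Real.cos (2 * η) * ∑ j, ‖ξ j‖ ^ 2 ≤ (AA ξ ^ 2).re := by
  rw [AA_sq, re_sum, Finset.mul_sum]
  exact Finset.sum_le_sum fun i _ => cos_two_mul_mul_sq_norm_le_re_sq hη (hξ i)

theorem sq_norm_AA_le_sum_sq_norm (ξ : Fin n → ℂ) : ‖AA ξ‖ ^ 2 ≤ ∑ j, ‖ξ j‖ ^ 2 := by
  rw [← norm_pow, AA_sq]
  exact norm_sum_le_of_le _ fun j _ => (norm_pow _ _).le

theorem cos_two_mul_mul_norm_AA_sq_le_re (hη₀ : 0 ≤ η) (hη : η ≤ Real.pi / 4)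
    (hξ : ∀ i, ξ i ∈ DSector η) :
    Real.cos (2 * η) * ‖AA ξ ^ 2‖ ≤ (AA ξ ^ 2).re := by
  have hc : 0 ≤ Real.cos (2 * η) := Real.cos_nonneg_of_mem_Icc ⟨by linarith, by linarith⟩
  calc Real.cos (2 * η) * ‖AA ξ ^ 2‖ ≤ Real.cos (2 * η) * ∑ j, ‖ξ j‖ ^ 2 := by
        rw [norm_pow]; gcongr; exact sq_norm_AA_le_sum_sq_norm ξ
    _ ≤ (AA ξ ^ 2).re := cos_two_mul_mul_sum_sq_norm_le_re_AA_sq (by linarith) hξ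

theorem abs_arg_AA_sq_le (hη₀ : 0 ≤ η) (hη : η ≤ Real.pi / 4)
    (hξ : ∀ i, ξ i ∈ DSector η) :
    |(AA ξ ^ 2).arg| ≤ 2 * η :=
  abs_arg_le_of_cos_mul_norm_le_re (by linarith) (cos_two_mul_mul_norm_AA_sq_le_re hη₀ hη hξ)

theorem cos_mul_norm_AA_le_re (hη₀ : 0 ≤ η) (hη : η ≤ Real.pi / 4)
    (hξ : ∀ i, ξ i ∈ DSector η) :
    Real.cos η * ‖AA ξ‖ ≤ (AA ξ).re := by
  have hcos : Real.sqrt ((1 + Real.cos (2 * η)) / 2) = Real.cos η := by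
    rw [show (1 + Real.cos (2 * η)) / 2 = Real.cos η ^ 2 by rw [Real.cos_sq η]; ring]
    exact Real.sqrt_sq (Real.cos_nonneg_of_mem_Icc ⟨by linarith, by linarith⟩)
  have h := mul_norm_cpow_inv_two_le_re (cos_two_mul_mul_norm_AA_sq_le_re hη₀ hη hξ)
  rwa [hcos, AA_sq, ← one_div, ← AA] at h

theorem sqrt_cos_two_mul_mul_norm_le_norm_AA (hη₀ : 0 ≤ η) (hη : η ≤ Real.pi / 4)
    (hξ : ∀ i, ξ i ∈ DSector η) (l : Fin n) :
    Real.sqrt (Real.cos (2 * η)) * ‖ξ l‖ ≤ ‖AA ξ‖ := by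
  have hc : 0 ≤ Real.cos (2 * η) := Real.cos_nonneg_of_mem_Icc ⟨by linarith, by linarith⟩
  have hsq : Real.cos (2 * η) * ‖ξ l‖ ^ 2 ≤ ‖AA ξ‖ ^ 2 :=
    calc Real.cos (2 * η) * ‖ξ l‖ ^ 2 ≤ Real.cos (2 * η) * ∑ j, ‖ξ j‖ ^ 2 := by
          gcongr
          exact Finset.single_le_sum (f := fun j => ‖ξ j‖ ^ 2) (fun _ _ => by positivity)
            (Finset.mem_univ l)
      _ ≤ (AA ξ ^ 2).re := cos_two_mul_mul_sum_sq_norm_le_re_AA_sq (by linarith) hξ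
      _ ≤ ‖AA ξ‖ ^ 2 := norm_pow (AA ξ) 2 ▸ re_le_norm _
  have := Real.sqrt_le_sqrt hsq
  rwa [Real.sqrt_mul hc, Real.sqrt_sq (norm_nonneg _), Real.sqrt_sq (norm_nonneg _)] at this

theorem sqrt_sin_mul_norm_AA_le_norm_BB (hη₀ : 0 ≤ η) (hη : η ≤ Real.pi / 4)
    (hξ : ∀ i, ξ i ∈ DSector η) {ε : ℝ} (hηε : 2 * η ≤ ε) {lam : ℂ}
    (hlam : lam ∈ SSector ε) :
    Real.sqrt (Real.sin (ε - 2 * η)) * ‖AA ξ‖ ≤ ‖BB lam ξ‖ := by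
  have hsin : Real.sin (ε - 2 * η) * ‖AA ξ‖ ^ 2 ≤ ‖BB lam ξ‖ ^ 2 := by
    rw [sq_norm_BB, ← norm_pow]
    refine sin_mul_norm_le_norm_add (by linarith) ?_
    linarith [hlam.2, abs_arg_AA_sq_le hη₀ hη hξ]
  have := Real.sqrt_le_sqrt hsin
  rwa [Real.sqrt_mul' _ (by positivity), Real.sqrt_sq (norm_nonneg _),
    Real.sqrt_sq (norm_nonneg _)] at this

end DoubleSector

theorem dirichlet_pressure_extra_symbol_bound_general
    (N : ℕ) (ε η : ℝ) (hε' : ε < Real.pi / 2)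
    (hη : 0 < η) (hη' : η < min (Real.pi / 4) (ε / 2)) :
    ∃ C : ℝ, 0 < C ∧ ∀ (lam : ℂ), lam ∈ SSector ε →
      ∀ ξ : Fin (N - 1) → ℂ, (∀ i, ξ i ∈ DSector η) →
      ∀ x : ℝ, 0 < x → ∀ l : Fin (N - 1),
        ‖ξ l‖
            * ‖(AA ξ + BB lam ξ) / BB lam ξ * Complex.exp (-AA ξ * (x : ℂ))‖
          + ‖deriv
              (fun y : ℝ => (AA ξ + BB lam ξ) / BB lam ξ * Complex.exp (-AA ξ * (y : ℂ))) x‖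
        ≤ C * x⁻¹ := by
  obtain ⟨hη4, hηε⟩ := lt_min_iff.mp hη'
  have hcos : 0 < Real.cos η := Real.cos_pos_of_mem_Ioo ⟨by linarith, by linarith⟩
  have hcos2 : 0 < Real.cos (2 * η) := Real.cos_pos_of_mem_Ioo ⟨by linarith, by linarith⟩
  have hsin : 0 < Real.sin (ε - 2 * η) := Real.sin_pos_of_pos_of_lt_pi (by linarith) (by linarith)
  refine ⟨((Real.sqrt (Real.cos (2 * η)))⁻¹ + 1) * (1 + (Real.sqrt (Real.sin (ε - 2 * η)))⁻¹)
    * (Real.cos η)⁻¹, mul_pos (by positivity) (inv_pos.2 hcos), ?_⟩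
  intro lam hlam ξ hξ x hx l
  exact norm_mul_norm_add_norm_deriv_le hcos (Real.sqrt_pos.2 hsin) (Real.sqrt_pos.2 hcos2) hx
    (cos_mul_norm_AA_le_re hη.le hη4.le hξ)
    (sqrt_sin_mul_norm_AA_le_norm_BB hη.le hη4.le hξ (by linarith) hlam)
    (sqrt_cos_two_mul_mul_norm_le_norm_AA hη.le hη4.le hξ l)

/-- Bound for the symbol `S = A B^{−2} χ^D_N = ((A+B)/B) e^{−A x_N}`. -/
theorem dirichlet_pressure_extra_symbol_bound
    (N : ℕ) (hN : 2 ≤ N) (ε η : ℝ) (hε : 0 < ε) (hε' : ε < Real.pi / 2)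
    (hη : 0 < η) (hη' : η < min (Real.pi / 4) (ε / 2)) :
    ∃ C : ℝ, 0 < C ∧ ∀ (lam : ℂ), lam ∈ SSector ε →
      ∀ ξ : Fin (N - 1) → ℂ, (∀ i, ξ i ∈ DSector η) →
      ∀ x : ℝ, 0 < x → ∀ l : Fin (N - 1),
        ‖ξ l‖
            * ‖(AA ξ + BB lam ξ) / BB lam ξ * Complex.exp (-AA ξ * (x : ℂ))‖
          + ‖deriv
              (fun y : ℝ => (AA ξ + BB lam ξ) / BB lam ξ * Complex.exp (-AA ξ * (y : ℂ))) x‖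
        ≤ C * x⁻¹ :=
  dirichlet_pressure_extra_symbol_bound_general N ε η hε' hη hη'
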